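/- arXiv:1504.06954 — 2 statements merged into one kernel-verified Lean document; each statement's English description precedes it below -/
import Mathlib

section
/- Let P be a string occurring at positions i and i' in a text T, and suppose a parsing boundary function assigns a boundary decision at each position depending only on the Δ_L characters to the left and Δ_R characters to the right. Then for any offset k with Δ_L ≤ k and k + Δ_R ≤ |P|, position i + k - 1 is a boundary if and only if position i' + k - 1 is a boundary. -/
theorem window_eq_of_occurrence {α : Type*} (T : ℤ → α) {m : ℕ} {i i' : ℤ}
    (hocc : ∀ k : ℕ, k < m → T (i + k) = T (i' + k)) {ΔL ΔR k : ℕ}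
    (hL : ΔL ≤ k) (hR : k + ΔR < m) (t : ℤ) (htL : -(ΔL : ℤ) ≤ t) (htR : t ≤ ΔR) :
    T (i + k + t) = T (i' + k + t) := by
  obtain ⟨n, hn⟩ : ∃ n : ℕ, (n : ℤ) = k + t := ⟨(k + t).toNat, Int.toNat_of_nonneg (by omega)⟩
  have h := hocc n (by omega)
  rwa [hn, ← add_assoc, ← add_assoc] at h

/-- A boundary decision depending only on ΔL characters to the left and ΔR to
the right is consistent across two occurrences of the same string P. -/
theorem stmt_12 {α : Type*} (T : ℤ → α) (b : ℤ → Bool) (ΔL ΔR : ℕ)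
    (hloc : ∀ j j' : ℤ,
      (∀ t : ℤ, -(ΔL : ℤ) ≤ t → t ≤ (ΔR : ℤ) → T (j + t) = T (j' + t)) →
      b j = b j')
    (m : ℕ) (i i' : ℤ)
    (hocc : ∀ k : ℕ, k < m → T (i + k) = T (i' + k)) :
    ∀ k : ℕ, ΔL ≤ k → k + ΔR < m → b (i + k) = b (i' + k) :=
  fun _ hL hR => hloc _ _ (window_eq_of_occurrence T hocc hL hR)
end

section
/- Given the decomposition Occ(P,T) = { j + k - 1 | (X, j) is a primary occurrence of P and k ∈ vOcc(X, S) } for an SLP: every occurrence of a pattern P with |P| ≥ 2 in T = val(S) is uniquely captured by a lowest variable X in the derivation tree such that the occurrence crosses the boundary between X.left and X.right; formally, for each occurrence position o of P in T there exist unique X in the derivation tree (as a node) and split 1 ≤ j' < |P| such that P[1..j'] is a suffix of val(X_ℓ) and P[j'+1..] is a prefix of val(X_r), where X → X_ℓ X_r. -/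
/-! Descend from the root towards the occurrence interval `[o, o + |P|)`. At an internal node
with split point `s` the interval lies left of `s`, right of `s`, or straddles `s`; for a
nonempty interval the first two cases exclude each other, so the descent is forced, and it
must stop at a straddling node because a leaf derives a single letter while `|P| ≥ 2`. -/

/-- Follow a root-to-node path (false = left, true = right) in the derivation
tree of an SLP, returning the variable at that node together with the starting
position (0-indexed) of the substring it derives. -/
def nodeAt {α : Type*} {n : ℕ} (rhs : Fin n → α ⊕ (Fin n × Fin n))
    (v : Fin n → List α) : Fin n → ℕ → List Bool → Option (Fin n × ℕ)
  | i, p, [] => some (i, p)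
  | i, p, b :: π =>
    match rhs i with
    | Sum.inl _ => none
    | Sum.inr (l, r) =>
      if b then nodeAt rhs v r (p + (v l).length) π else nodeAt rhs v l p π

namespace nodeAt

variable {α : Type*} {n : ℕ} (rhs : Fin n → α ⊕ (Fin n × Fin n)) (v : Fin n → List α)

def Covers (i : Fin n) (p o m : ℕ) : Prop :=
  p ≤ o ∧ o + m ≤ p + (v i).length

def Straddles (i : Fin n) (p o m : ℕ) : Prop :=
  Covers v i p o m ∧
    ∃ l r, rhs i = Sum.inr (l, r) ∧ o < p + (v l).length ∧ p + (v l).length < o + m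

variable {rhs v}

theorem interval_subset (hv2 : ∀ i p, rhs i = Sum.inr p → v i = v p.1 ++ v p.2) :
    ∀ {π : List Bool} {i : Fin n} {p : ℕ} {i' : Fin n} {p' : ℕ},
      nodeAt rhs v i p π = some (i', p') → p ≤ p' ∧ p' + (v i').length ≤ p + (v i).length
  | [], i, p, i', p', h => by
    cases h
    omega
  | b :: π, i, p, i', p', h => by
    rcases hr : rhs i with a | ⟨l, r⟩
    · simp [nodeAt, hr] at h
    · have hlen : (v i).length = (v l).length + (v r).length := by simp [hv2 i (l, r) hr]
      cases b
      · have := interval_subset hv2 (by simpa [nodeAt, hr] using h)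
        omega
      · have := interval_subset hv2 (by simpa [nodeAt, hr] using h)
        omega

theorem cons_covers (hv2 : ∀ i p, rhs i = Sum.inr p → v i = v p.1 ++ v p.2)
    {b : Bool} {π : List Bool} {i : Fin n} {p : ℕ} {i' : Fin n} {p' o m : ℕ}
    (h : nodeAt rhs v i p (b :: π) = some (i', p')) (hcov : Covers v i' p' o m) :
    ∃ l r, rhs i = Sum.inr (l, r) ∧
      nodeAt rhs v (if b then r else l) (if b then p + (v l).length else p) π = some (i', p') ∧
      if b then p + (v l).length ≤ o else o + m ≤ p + (v l).length := by
  rcases hr : rhs i with a | ⟨l, r⟩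
  · simp [nodeAt, hr] at h
  · unfold Covers at hcov
    cases b
    · have h' : nodeAt rhs v l p π = some (i', p') := by simpa [nodeAt, hr] using h
      have := interval_subset hv2 h'
      exact ⟨l, r, rfl, h', by simp only [Bool.false_eq_true, if_false]; omega⟩
    · have h' : nodeAt rhs v r (p + (v l).length) π = some (i', p') := by
        simpa [nodeAt, hr] using h
      have := interval_subset hv2 h'
      exact ⟨l, r, rfl, h', by simp only [if_true]; omega⟩

theorem not_straddles_of_cons (hv2 : ∀ i p, rhs i = Sum.inr p → v i = v p.1 ++ v p.2)
    {b : Bool} {π : List Bool} {i : Fin n} {p : ℕ} {i' : Fin n} {p' o m : ℕ}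
    (h : nodeAt rhs v i p (b :: π) = some (i', p')) (hcov : Covers v i' p' o m) :
    ¬ Straddles rhs v i p o m := by
  rintro ⟨-, l, r, hr, hlo, hhi⟩
  obtain ⟨l', r', hr', -, hside⟩ := cons_covers hv2 h hcov
  rw [hr] at hr'
  cases hr'
  cases b
  · simp only [Bool.false_eq_true, if_false] at hside
    omega
  · simp only [if_true] at hside
    omega

theorem eq_of_straddles (hv2 : ∀ i p, rhs i = Sum.inr p → v i = v p.1 ++ v p.2) {o m : ℕ} :
    ∀ {π₁ π₂ : List Bool} {i : Fin n} {p : ℕ} {i₁ i₂ : Fin n} {p₁ p₂ : ℕ},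
      nodeAt rhs v i p π₁ = some (i₁, p₁) → Straddles rhs v i₁ p₁ o m →
      nodeAt rhs v i p π₂ = some (i₂, p₂) → Straddles rhs v i₂ p₂ o m → π₁ = π₂
  | [], [], _, _, _, _, _, _, _, _, _, _ => rfl
  | [], _ :: _, _, _, _, _, _, _, h₁, hs₁, h₂, hs₂ => by
    cases h₁
    exact absurd hs₁ (not_straddles_of_cons hv2 h₂ hs₂.1)
  | _ :: _, [], _, _, _, _, _, _, h₁, hs₁, h₂, hs₂ => by
    cases h₂
    exact absurd hs₂ (not_straddles_of_cons hv2 h₁ hs₁.1)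
  | b₁ :: π₁, b₂ :: π₂, i, p, _, _, _, _, h₁, hs₁, h₂, hs₂ => by
    obtain ⟨l, r, hr, h₁', hside₁⟩ := cons_covers hv2 h₁ hs₁.1
    obtain ⟨l', r', hr', h₂', hside₂⟩ := cons_covers hv2 h₂ hs₂.1
    rw [hr] at hr'
    cases hr'
    have hm : 0 < m := by obtain ⟨_, _, _, hlo, hhi⟩ := hs₁.2; omega
    obtain rfl : b₁ = b₂ := by
      cases b₁ <;> cases b₂ <;>
        simp only [Bool.false_eq_true, if_false, if_true] at hside₁ hside₂ <;>
        first | rfl | omega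
    rw [eq_of_straddles hv2 h₁' hs₁ h₂' hs₂]

theorem exists_straddles (wf : ∀ i p, rhs i = Sum.inr p → p.1 < i ∧ p.2 < i)
    (hv1 : ∀ i a, rhs i = Sum.inl a → v i = [a])
    (hv2 : ∀ i p, rhs i = Sum.inr p → v i = v p.1 ++ v p.2)
    {o m : ℕ} (hm : 2 ≤ m) (i : Fin n) {p : ℕ} (hcov : Covers v i p o m) :
    ∃ π i' p', nodeAt rhs v i p π = some (i', p') ∧ Straddles rhs v i' p' o m := by
  induction i using WellFoundedLT.induction generalizing p with
  | ind i ih =>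
    unfold Covers at hcov
    rcases hr : rhs i with a | ⟨l, r⟩
    · have := hcov.2
      rw [hv1 i a hr, List.length_singleton] at this
      omega
    · have hlen : (v i).length = (v l).length + (v r).length := by simp [hv2 i (l, r) hr]
      by_cases hleft : o + m ≤ p + (v l).length
      · obtain ⟨π, i', p', h, hs⟩ := ih l (wf i (l, r) hr).1 ⟨hcov.1, hleft⟩
        exact ⟨false :: π, i', p', by simpa [nodeAt, hr] using h, hs⟩
      by_cases hright : p + (v l).length ≤ o
      · obtain ⟨π, i', p', h, hs⟩ := ih r (wf i (l, r) hr).2 ⟨hright, by omega⟩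
        exact ⟨true :: π, i', p', by simpa [nodeAt, hr] using h, hs⟩
      exact ⟨[], i, p, rfl, ⟨hcov.1, hcov.2⟩, l, r, hr, by omega, by omega⟩

end nodeAt

theorem stmt_16_general {α : Type*} (n : ℕ)
    (rhs : Fin n → α ⊕ (Fin n × Fin n))
    (wf : ∀ i p, rhs i = Sum.inr p → p.1 < i ∧ p.2 < i)
    (v : Fin n → List α)
    (hv1 : ∀ i a, rhs i = Sum.inl a → v i = [a])
    (hv2 : ∀ i p, rhs i = Sum.inr p → v i = v p.1 ++ v p.2)
    (start : Fin n)
    (P : List α) (hP : 2 ≤ P.length)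
    (o : ℕ) (hin : o + P.length ≤ (v start).length) :
    ∃! x : List Bool × ℕ,
      ∃ (i : Fin n) (p : ℕ) (l r : Fin n),
        nodeAt rhs v start 0 x.1 = some (i, p) ∧
        rhs i = Sum.inr (l, r) ∧
        1 ≤ x.2 ∧ x.2 < P.length ∧
        p ≤ o ∧ o + P.length ≤ p + (v i).length ∧
        p + (v l).length = o + x.2 := by
  obtain ⟨π, i, p, hnode, hs⟩ :=
    nodeAt.exists_straddles wf hv1 hv2 hP start ⟨Nat.zero_le o, by omega⟩
  obtain ⟨⟨hle, hge⟩, l, r, hr, hlo, hhi⟩ := id hs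
  refine ⟨(π, p + (v l).length - o),
    ⟨i, p, l, r, hnode, hr, by omega, by omega, hle, hge, by omega⟩, ?_⟩
  rintro ⟨π', j⟩ ⟨i', p', l', r', hnode', hr', hj1, hj2, hle', hge', hsplit⟩
  obtain rfl : π' = π := nodeAt.eq_of_straddles hv2
    hnode' ⟨⟨hle', hge'⟩, l', r', hr', by omega, by omega⟩ hnode hs
  rw [hnode] at hnode'
  cases hnode'
  rw [hr] at hr'
  cases hr'
  simp only [Prod.mk.injEq, true_and]
  omega

/-- Every occurrence of a pattern P (|P| ≥ 2) in val(S) is captured by a unique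
lowest derivation-tree node whose left/right boundary the occurrence straddles,
with a unique split 1 ≤ j' < |P|. -/
theorem stmt_16 {α : Type*} (n : ℕ) (hn : 1 ≤ n)
    (rhs : Fin n → α ⊕ (Fin n × Fin n))
    (wf : ∀ i p, rhs i = Sum.inr p → p.1 < i ∧ p.2 < i)
    (v : Fin n → List α)
    (hv1 : ∀ i a, rhs i = Sum.inl a → v i = [a])
    (hv2 : ∀ i p, rhs i = Sum.inr p → v i = v p.1 ++ v p.2)
    (start : Fin n) (hstart : (start : ℕ) = n - 1)
    (P : List α) (hP : 2 ≤ P.length)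
    (o : ℕ) (hin : o + P.length ≤ (v start).length)
    (hocc : ((v start).drop o).take P.length = P) :
    ∃! x : List Bool × ℕ,
      ∃ (i : Fin n) (p : ℕ) (l r : Fin n),
        nodeAt rhs v start 0 x.1 = some (i, p) ∧
        rhs i = Sum.inr (l, r) ∧
        1 ≤ x.2 ∧ x.2 < P.length ∧
        p ≤ o ∧ o + P.length ≤ p + (v i).length ∧
        p + (v l).length = o + x.2 :=
  stmt_16_general n rhs wf v hv1 hv2 start P hP o hin
end
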